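/- Cholesky update under deleting a middle block: if Σ̄ = [[Σ₁₁, σ₁, Σ₁₂],[σ₁ᵀ, σ, σ₂ᵀ],[Σ₂₁, σ₂, Σ₂₂]] has Cholesky factor L̄ = [[Ā,0,0],[ā, b̄, 0],[B̄, c̄, C̄]], then the reduced matrix Σ = [[Σ₁₁, Σ₁₂],[Σ₂₁, Σ₂₂]] has Cholesky factor L = [[A,0],[B,C]] with A = Ā, B = B̄, and C Cᵀ = C̄ C̄ᵀ + c̄ c̄ᵀ. -/

import Mathlib

/-!
`Σ` is the submatrix of `L̄ L̄ᵀ` obtained by deleting the middle rows and columns, so it is the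
Gram matrix of the rows `[Ā, 0, 0]` and `[B̄, c̄, C̄]` of `L̄`. Comparing blocks with `L Lᵀ`:
the leading blocks give `A Aᵀ = Ā Āᵀ`, hence `A = Ā` by uniqueness of the Cholesky factor; the
off-diagonal blocks give `B Aᵀ = B̄ Āᵀ`, hence `B = B̄` as `A` is invertible; and the trailing
blocks give `B Bᵀ + C Cᵀ = B̄ B̄ᵀ + c̄ c̄ᵀ + C̄ C̄ᵀ`.
Uniqueness of the Cholesky factor: if `L₁ L₁ᵀ = L₂ L₂ᵀ` then `M = L₂⁻¹ L₁` is lower triangular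
with positive diagonal and `M Mᵀ = 1`, so `Mᵀ = M⁻¹` is lower triangular too, and `M = 1`.
-/

open Matrix

namespace Matrix

theorem fromBlocks_zero₁₂_mul_transpose {m n o p α : Type*} [Fintype n] [Fintype p]
    [NonUnitalNonAssocSemiring α] (A : Matrix m n α) (B : Matrix o n α) (C : Matrix o p α) :
    fromBlocks A 0 B C * (fromBlocks A 0 B C)ᵀ =
      fromBlocks (A * Aᵀ) (A * Bᵀ) (B * Aᵀ) (B * Bᵀ + C * Cᵀ) := by
  simp [fromBlocks_transpose, fromBlocks_multiply]

variable {n R : Type*} [Fintype n] [LinearOrder n]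

theorem IsLowerTriangular.mul_apply_self [NonUnitalNonAssocSemiring R] {M N : Matrix n n R}
    (hM : M.IsLowerTriangular) (hN : N.IsLowerTriangular) (i : n) :
    (M * N) i i = M i i * N i i := by
  rw [mul_apply, Finset.sum_eq_single i _ (by simp)]
  intro k _ hki
  rcases hki.lt_or_gt with hlt | hlt
  · rw [hN hlt, mul_zero]
  · rw [hM hlt, zero_mul]

theorem IsLowerTriangular.isUnit_det [Field R] {L : Matrix n n R} (hL : L.IsLowerTriangular)
    (hdiag : ∀ i, L i i ≠ 0) : IsUnit L.det := by
  rw [det_of_isLowerTriangular L hL]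
  exact (Finset.prod_ne_zero_iff.mpr fun i _ => hdiag i).isUnit

variable [Field R] [LinearOrder R] [IsStrictOrderedRing R]

theorem IsLowerTriangular.eq_one_of_mul_transpose_eq_one {M : Matrix n n R}
    (hM : M.IsLowerTriangular) (hdiag : ∀ i, 0 < M i i) (h : M * Mᵀ = 1) : M = 1 := by
  have : Invertible M := invertibleOfRightInverse M Mᵀ h
  have hMt : Mᵀ.IsLowerTriangular :=
    inv_eq_right_inv h ▸ blockTriangular_inv_of_blockTriangular hM
  have hdiag_one (i : n) : M i i = 1 := by
    have hsq : M i i * M i i = 1 := by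
      simpa [hM.mul_apply_self hMt] using congr_fun₂ h i i
    nlinarith [hdiag i]
  ext i j
  rcases lt_trichotomy i j with hlt | rfl | hgt
  · rw [hM hlt, one_apply_ne hlt.ne]
  · rw [hdiag_one, one_apply_eq]
  · rw [← transpose_apply M j i, hMt hgt, one_apply_ne hgt.ne']

theorem IsLowerTriangular.eq_of_mul_transpose_eq {L₁ L₂ : Matrix n n R}
    (h₁ : L₁.IsLowerTriangular) (hd₁ : ∀ i, 0 < L₁ i i)
    (h₂ : L₂.IsLowerTriangular) (hd₂ : ∀ i, 0 < L₂ i i)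
    (h : L₁ * L₁ᵀ = L₂ * L₂ᵀ) : L₁ = L₂ := by
  have : Invertible L₂ := invertibleOfIsUnitDet L₂ (h₂.isUnit_det fun i => (hd₂ i).ne')
  have hinv : L₂⁻¹.IsLowerTriangular := blockTriangular_inv_of_blockTriangular h₂
  have hinv_diag (i : n) : L₂⁻¹ i i = (L₂ i i)⁻¹ := by
    refine eq_inv_of_mul_eq_one_left ?_
    rw [← hinv.mul_apply_self h₂, inv_mul_of_invertible, one_apply_eq]
  have hM : (L₂⁻¹ * L₁).IsLowerTriangular := hinv.mul h₁
  have hMdiag (i : n) : 0 < (L₂⁻¹ * L₁) i i := by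
    rw [hinv.mul_apply_self h₁, hinv_diag]
    exact mul_pos (inv_pos.mpr (hd₂ i)) (hd₁ i)
  have hMM : L₂⁻¹ * L₁ * (L₂⁻¹ * L₁)ᵀ = 1 := by
    calc L₂⁻¹ * L₁ * (L₂⁻¹ * L₁)ᵀ = L₂⁻¹ * (L₁ * L₁ᵀ) * L₂ᵀ⁻¹ := by
          rw [transpose_mul, transpose_nonsing_inv]; simp only [Matrix.mul_assoc]
      _ = 1 := by
          rw [h, ← Matrix.mul_assoc, inv_mul_of_invertible, Matrix.one_mul,
            mul_inv_of_invertible]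
  calc L₁ = L₂ * (L₂⁻¹ * L₁) := (mul_inv_cancel_left_of_invertible L₂ L₁).symm
    _ = L₂ := by rw [hM.eq_one_of_mul_transpose_eq_one hMdiag hMM, Matrix.mul_one]

end Matrix

theorem stmt13_general (p q r : ℕ)
    (S11 : Matrix (Fin p) (Fin p) ℝ) (S12 : Matrix (Fin p) (Fin r) ℝ)
    (S21 : Matrix (Fin r) (Fin p) ℝ) (S22 : Matrix (Fin r) (Fin r) ℝ)
    (s1 : Matrix (Fin p) (Fin q) ℝ) (s0 : Matrix (Fin q) (Fin q) ℝ)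
    (s2 : Matrix (Fin r) (Fin q) ℝ)
    (A Abar : Matrix (Fin p) (Fin p) ℝ) (B Bbar : Matrix (Fin r) (Fin p) ℝ)
    (C Cbar : Matrix (Fin r) (Fin r) ℝ)
    (abar : Matrix (Fin q) (Fin p) ℝ) (bbar : Matrix (Fin q) (Fin q) ℝ)
    (cbar : Matrix (Fin r) (Fin q) ℝ)
    (hAtri : ∀ i j : Fin p, i < j → A i j = 0) (hAdiag : ∀ i : Fin p, 0 < A i i)
    (hAbtri : ∀ i j : Fin p, i < j → Abar i j = 0) (hAbdiag : ∀ i : Fin p, 0 < Abar i i)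
    (hLbar : Matrix.fromBlocks Abar 0 (Matrix.fromRows abar Bbar)
                (Matrix.fromBlocks bbar 0 cbar Cbar) *
              (Matrix.fromBlocks Abar 0 (Matrix.fromRows abar Bbar)
                (Matrix.fromBlocks bbar 0 cbar Cbar))ᵀ
            = Matrix.fromBlocks S11 (Matrix.fromCols s1 S12)
                (Matrix.fromRows s1ᵀ S21)
                (Matrix.fromBlocks s0 s2ᵀ s2 S22))
    (hL : Matrix.fromBlocks A 0 B C * (Matrix.fromBlocks A 0 B C)ᵀ
            = Matrix.fromBlocks S11 S12 S21 S22) :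
    A = Abar ∧ B = Bbar ∧ C * Cᵀ = Cbar * Cbarᵀ + cbar * cbarᵀ := by
  rw [fromBlocks_zero₁₂_mul_transpose, fromBlocks_inj] at hL hLbar
  obtain ⟨hAA, -, hBA, hBC⟩ := hL
  obtain ⟨hAAbar, -, hBAbar, hBCbar⟩ := hLbar
  rw [fromRows_mul, fromRows_inj.eq_iff] at hBAbar
  rw [fromBlocks_zero₁₂_mul_transpose, transpose_fromRows, fromRows_mul_fromCols, fromBlocks_add,
    fromBlocks_inj] at hBCbar
  have hA : A = Abar := IsLowerTriangular.eq_of_mul_transpose_eq (fun i j h => hAtri i j h) hAdiag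
    (fun i j h => hAbtri i j h) hAbdiag (hAA.trans hAAbar.symm)
  subst hA
  have : Invertible Aᵀ := invertibleOfIsUnitDet _ <| by
    rw [det_transpose]
    exact IsLowerTriangular.isUnit_det (fun i j h => hAtri i j h) fun i => (hAdiag i).ne'
  have hB : B = Bbar := mul_left_injective_of_invertible Aᵀ (hBA.trans hBAbar.2.symm)
  subst hB
  refine ⟨rfl, rfl, ?_⟩
  rw [add_comm, ← add_right_inj (B * Bᵀ), hBC, hBCbar.2.2.2]

/-- Cholesky update under deleting a middle block. If
`Σ̄ = [[Σ₁₁,σ₁,Σ₁₂],[σ₁ᵀ,σ,σ₂ᵀ],[Σ₂₁,σ₂,Σ₂₂]]` has Cholesky factor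
`L̄ = [[Ā,0,0],[ā,b̄,0],[B̄,c̄,C̄]]`, then the reduced matrix `Σ = [[Σ₁₁,Σ₁₂],[Σ₂₁,Σ₂₂]]` has
Cholesky factor `L = [[A,0],[B,C]]` with `A = Ā`, `B = B̄` and `C Cᵀ = C̄ C̄ᵀ + c̄ c̄ᵀ`. -/
theorem stmt13 (p q r : ℕ)
    (S11 : Matrix (Fin p) (Fin p) ℝ) (S12 : Matrix (Fin p) (Fin r) ℝ)
    (S21 : Matrix (Fin r) (Fin p) ℝ) (S22 : Matrix (Fin r) (Fin r) ℝ)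
    (s1 : Matrix (Fin p) (Fin q) ℝ) (s0 : Matrix (Fin q) (Fin q) ℝ)
    (s2 : Matrix (Fin r) (Fin q) ℝ)
    (A Abar : Matrix (Fin p) (Fin p) ℝ) (B Bbar : Matrix (Fin r) (Fin p) ℝ)
    (C Cbar : Matrix (Fin r) (Fin r) ℝ)
    (abar : Matrix (Fin q) (Fin p) ℝ) (bbar : Matrix (Fin q) (Fin q) ℝ)
    (cbar : Matrix (Fin r) (Fin q) ℝ)
    (hAtri : ∀ i j : Fin p, i < j → A i j = 0) (hAdiag : ∀ i : Fin p, 0 < A i i)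
    (hCtri : ∀ i j : Fin r, i < j → C i j = 0) (hCdiag : ∀ i : Fin r, 0 < C i i)
    (hAbtri : ∀ i j : Fin p, i < j → Abar i j = 0) (hAbdiag : ∀ i : Fin p, 0 < Abar i i)
    (hbbtri : ∀ i j : Fin q, i < j → bbar i j = 0) (hbbdiag : ∀ i : Fin q, 0 < bbar i i)
    (hCbtri : ∀ i j : Fin r, i < j → Cbar i j = 0) (hCbdiag : ∀ i : Fin r, 0 < Cbar i i)
    (hPD : (Matrix.fromBlocks S11 (Matrix.fromCols s1 S12)
              (Matrix.fromRows s1ᵀ S21)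
              (Matrix.fromBlocks s0 s2ᵀ s2 S22)).PosDef)
    (hLbar : Matrix.fromBlocks Abar 0 (Matrix.fromRows abar Bbar)
                (Matrix.fromBlocks bbar 0 cbar Cbar) *
              (Matrix.fromBlocks Abar 0 (Matrix.fromRows abar Bbar)
                (Matrix.fromBlocks bbar 0 cbar Cbar))ᵀ
            = Matrix.fromBlocks S11 (Matrix.fromCols s1 S12)
                (Matrix.fromRows s1ᵀ S21)
                (Matrix.fromBlocks s0 s2ᵀ s2 S22))
    (hL : Matrix.fromBlocks A 0 B C * (Matrix.fromBlocks A 0 B C)ᵀ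
            = Matrix.fromBlocks S11 S12 S21 S22) :
    A = Abar ∧ B = Bbar ∧ C * Cᵀ = Cbar * Cbarᵀ + cbar * cbarᵀ :=
  stmt13_general p q r S11 S12 S21 S22 s1 s0 s2 A Abar B Bbar C Cbar abar bbar cbar hAtri hAdiag
    hAbtri hAbdiag hLbar hL
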